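/- arXiv:2406.13277 — 2 statements merged into one kernel-verified Lean document; each statement's English description precedes it below -/
import Mathlib

section
/- A minimal subgraph M of ℤ² cannot contain a vertex with exactly one neighbor in M. -/
open Set

/-- Vertices of the integer lattice `ℤⁿ`. -/
abbrev Vtx (n : ℕ) := Fin n → ℤ

/-- Adjacency in the integer lattice: Euclidean (equivalently ℓ¹) distance one. -/
def ZAdj {n : ℕ} (x y : Vtx n) : Prop := (∑ i, (x i - y i).natAbs) = 1

/-- Exterior vertex boundary. -/
def extB {n : ℕ} (Ω : Set (Vtx n)) : Set (Vtx n) := {z | z ∉ Ω ∧ ∃ w ∈ Ω, ZAdj z w}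

/-- Closure `Ω̄ = Ω ∪ τΩ`. -/
def clos {n : ℕ} (Ω : Set (Vtx n)) : Set (Vtx n) := Ω ∪ extB Ω

/-- Directed version of `E_Ω = E(Ω, Ω̄)`. -/
def dirE {n : ℕ} (Ω : Set (Vtx n)) : Set (Vtx n × Vtx n) :=
  {p | ZAdj p.1 p.2 ∧ p.1 ∈ clos Ω ∧ p.2 ∈ clos Ω ∧ (p.1 ∈ Ω ∨ p.2 ∈ Ω)}

/-- Directed edge boundary of `F`; each undirected boundary edge is counted once. -/
def dirBdry {n : ℕ} (F : Set (Vtx n)) : Set (Vtx n × Vtx n) :=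
  {p | ZAdj p.1 p.2 ∧ p.1 ∈ F ∧ p.2 ∉ F}

/-- `M ⊆ ℤⁿ` is a minimal (area-minimizing) subgraph. -/
def IsMinimal {n : ℕ} (M : Set (Vtx n)) : Prop :=
  ∀ Ω : Set (Vtx n), Ω.Finite → ∀ F : Set (Vtx n), symmDiff F M ⊆ Ω →
    (dirBdry M ∩ dirE Ω).ncard ≤ (dirBdry F ∩ dirE Ω).ncard

/-- Vertex boundary `δM`. -/
def vB {n : ℕ} (M : Set (Vtx n)) : Set (Vtx n) := {x | x ∈ M ∧ ∃ y, y ∉ M ∧ ZAdj x y}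

/-- Degree of `x` in the subgraph induced on `M`. -/
noncomputable def degIn {n : ℕ} (M : Set (Vtx n)) (x : Vtx n) : ℕ :=
  ({y | y ∈ M ∧ ZAdj x y}).ncard

/-- Combinatorial (graph) distance in `ℤⁿ`, which equals the ℓ¹ distance. -/
def latDist {n : ℕ} (x y : Vtx n) : ℕ := ∑ i, (x i - y i).natAbs

/-- The ∞-normed ball `B̂_r(x)`. -/
def Bhat {n : ℕ} (x : Vtx n) (r : ℕ) : Set (Vtx n) := {y | ∀ i, (y i - x i).natAbs ≤ r}

/-- The set of vertices of `M` lying in some unit `n`-cube all of whose vertices are in `M`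
(the vertices of the `n`-skeleton `Mⁿ`). -/
def skel {n : ℕ} (M : Set (Vtx n)) : Set (Vtx n) :=
  {x | x ∈ M ∧ ∃ v : Vtx n, (∀ i, x i = v i ∨ x i = v i + 1) ∧
    ∀ y : Vtx n, (∀ i, y i = v i ∨ y i = v i + 1) → y ∈ M}

/- ### Auxiliary lemmas -/

lemma eq2 {y z : Vtx 2} : y = z ↔ y 0 = z 0 ∧ y 1 = z 1 := by
  constructor
  · intro h; exact ⟨congrFun h 0, congrFun h 1⟩
  · rintro ⟨h0, h1⟩; funext i; fin_cases i <;> assumption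

lemma zadj_iff {x y : Vtx 2} : ZAdj x y ↔
    (y 0 = x 0 + 1 ∧ y 1 = x 1) ∨ (y 0 = x 0 - 1 ∧ y 1 = x 1) ∨
    (y 0 = x 0 ∧ y 1 = x 1 + 1) ∨ (y 0 = x 0 ∧ y 1 = x 1 - 1) := by
  unfold ZAdj
  rw [Fin.sum_univ_two]
  omega

lemma zadj_symm {x y : Vtx 2} (h : ZAdj x y) : ZAdj y x := by
  rw [zadj_iff] at h ⊢; omega

lemma zadj_ne {x y : Vtx 2} (h : ZAdj x y) : y ≠ x := by
  rw [zadj_iff] at h; rw [Ne, eq2]; omega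

lemma nbr_set_eq (x : Vtx 2) : {y : Vtx 2 | ZAdj x y} =
    {![x 0 + 1, x 1], ![x 0 - 1, x 1], ![x 0, x 1 + 1], ![x 0, x 1 - 1]} := by
  ext y
  simp only [mem_setOf_eq, mem_insert_iff, mem_singleton_iff, zadj_iff, eq2,
    Matrix.cons_val_zero, Matrix.cons_val_one, Matrix.head_cons]

lemma nbr_finite (x : Vtx 2) : ({y : Vtx 2 | ZAdj x y}).Finite := by
  rw [nbr_set_eq]; exact Set.toFinite _

lemma nbr_ncard (x : Vtx 2) : ({y : Vtx 2 | ZAdj x y}).ncard = 4 := by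
  rw [nbr_set_eq]
  rw [Set.ncard_insert_of_notMem (by simp [eq2] <;> omega) (Set.toFinite _),
    Set.ncard_insert_of_notMem (by simp [eq2] <;> omega) (Set.toFinite _),
    Set.ncard_insert_of_notMem (by simp [eq2] <;> omega) (Set.toFinite _),
    Set.ncard_singleton]

lemma bhat_finite {n : ℕ} (x : Vtx n) (r : ℕ) : (Bhat x r).Finite := by
  apply (Set.Finite.pi (fun i => Set.finite_Icc (x i - r) (x i + r))).subset
  intro y hy
  simp only [mem_pi, mem_univ, mem_Icc, forall_true_left]
  intro i
  have := hy i
  omega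

lemma zadj_coord_le {x y : Vtx 2} (h : ZAdj x y) (i : Fin 2) : (x i - y i).natAbs ≤ 1 := by
  unfold ZAdj at h
  rw [Fin.sum_univ_two] at h
  fin_cases i
  · show (x 0 - y 0).natAbs ≤ 1
    omega
  · show (x 1 - y 1).natAbs ≤ 1
    omega

lemma clos_bhat_sub (x : Vtx 2) : clos (Bhat x 1) ⊆ Bhat x 2 := by
  rintro z (hz | ⟨-, w, hw, hadj⟩)
  · intro i; exact (hz i).trans one_le_two
  · intro i
    have h1 := zadj_coord_le hadj i
    have h2 := hw i
    omega

/-- a minimal subgraph of `ℤ²` has no vertex with exactly one neighbor in it. -/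
theorem no_isolated_vertex {M : Set (Vtx 2)} (hM : IsMinimal M) :
    ∀ x ∈ M, degIn M x ≠ 1 := by
  intro x hx hdeg
  simp only [degIn] at hdeg
  obtain ⟨y0, hy0⟩ := Set.ncard_eq_one.mp hdeg
  have hy0M : y0 ∈ M ∧ ZAdj x y0 := by
    have : y0 ∈ {y | y ∈ M ∧ ZAdj x y} := by rw [hy0]; exact rfl
    exact this
  set Ω : Set (Vtx 2) := Bhat x 1 with hΩdef
  have hxΩ : x ∈ Ω := by intro i; simp
  have hnbrΩ : ∀ z : Vtx 2, ZAdj x z → z ∈ Ω := by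
    intro z hz i
    have := zadj_coord_le hz i
    omega
  have hΩfin : Ω.Finite := bhat_finite x 1
  have hclosfin : (clos Ω).Finite := (bhat_finite x 2).subset (clos_bhat_sub x)
  set F : Set (Vtx 2) := M \ {x} with hFdef
  have hsub : symmDiff F M ⊆ Ω := by
    intro z hz
    rw [Set.mem_symmDiff] at hz
    have hzx : z = x := by
      rcases hz with ⟨hzF, hzM⟩ | ⟨hzM, hzF⟩
      · exact absurd hzF.1 hzM
      · by_contra hne
        exact hzF ⟨hzM, fun hh => hne (mem_singleton_iff.mp hh)⟩
    subst hzx; exact hxΩ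
  -- the neighbour sets
  set Nout : Set (Vtx 2) := {z | ZAdj x z ∧ z ∉ M} with hNoutdef
  have hNoutfin : Nout.Finite := (nbr_finite x).subset (fun z hz => hz.1)
  have hNinfin : ({y | y ∈ M ∧ ZAdj x y} : Set (Vtx 2)).Finite :=
    (nbr_finite x).subset (fun z hz => hz.2)
  have hNout3 : Nout.ncard = 3 := by
    have hsplit : {y : Vtx 2 | ZAdj x y} = {y | y ∈ M ∧ ZAdj x y} ∪ Nout := by
      ext z
      simp only [mem_setOf_eq, mem_union, hNoutdef]
      tauto
    have hdisj : Disjoint ({y | y ∈ M ∧ ZAdj x y} : Set (Vtx 2)) Nout := by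
      rw [Set.disjoint_left]
      rintro z ⟨hz1, -⟩ ⟨-, hz2⟩
      exact hz2 hz1
    have h4 := nbr_ncard x
    rw [hsplit, Set.ncard_union_eq hdisj hNinfin hNoutfin, hdeg] at h4
    omega
  -- the edge sets
  set S : Set (Vtx 2 × Vtx 2) := {p ∈ dirBdry M ∩ dirE Ω | p.1 ≠ x ∧ p.2 ≠ x} with hSdef
  set Ax : Set (Vtx 2 × Vtx 2) := (fun z => ((x, z) : Vtx 2 × Vtx 2)) '' Nout with hAxdef
  have hSfin : S.Finite := by
    apply (hclosfin.prod hclosfin).subset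
    rintro p ⟨⟨-, hE⟩, -, -⟩
    exact ⟨hE.2.1, hE.2.2.1⟩
  have hAxfin : Ax.Finite := hNoutfin.image _
  have hA : dirBdry M ∩ dirE Ω = S ∪ Ax := by
    ext p
    constructor
    · intro hp
      obtain ⟨⟨hadj, h1M, h2M⟩, hE⟩ := hp
      by_cases h1 : p.1 = x
      · right
        refine ⟨p.2, ⟨?_, h2M⟩, ?_⟩
        · rw [← h1]; exact hadj
        · exact Prod.ext h1.symm rfl
      · by_cases h2 : p.2 = x
        · exact absurd hx (h2 ▸ h2M)
        · exact Or.inl ⟨⟨⟨hadj, h1M, h2M⟩, hE⟩, h1, h2⟩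
    · rintro (⟨hp, -, -⟩ | ⟨z, ⟨hz1, hz2⟩, rfl⟩)
      · exact hp
      · exact ⟨⟨hz1, hx, hz2⟩, hz1, Or.inl hxΩ, Or.inl (hnbrΩ z hz1), Or.inl hxΩ⟩
  have hB : dirBdry F ∩ dirE Ω = S ∪ {((y0, x) : Vtx 2 × Vtx 2)} := by
    ext p
    constructor
    · intro hp
      obtain ⟨⟨hadj, h1F, h2F⟩, hE⟩ := hp
      have h1 : p.1 ≠ x := fun h => h1F.2 (mem_singleton_iff.mpr h)
      by_cases h2 : p.2 = x
      · right
        have hmem : p.1 ∈ {y | y ∈ M ∧ ZAdj x y} := ⟨h1F.1, zadj_symm (h2 ▸ hadj)⟩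
        rw [hy0, mem_singleton_iff] at hmem
        exact mem_singleton_iff.mpr (Prod.ext hmem h2)
      · left
        refine ⟨⟨⟨hadj, h1F.1, ?_⟩, hE⟩, h1, h2⟩
        intro hm
        exact h2F ⟨hm, fun hh => h2 (mem_singleton_iff.mp hh)⟩
    · rintro (⟨⟨hbd, hE⟩, h1, h2⟩ | hp)
      · exact ⟨⟨hbd.1, ⟨hbd.2.1, fun hh => h1 (mem_singleton_iff.mp hh)⟩,
          fun hf => hbd.2.2 hf.1⟩, hE⟩
      · rw [mem_singleton_iff] at hp
        subst hp
        refine ⟨⟨zadj_symm hy0M.2, ⟨hy0M.1, fun hh => (zadj_ne hy0M.2) (mem_singleton_iff.mp hh)⟩,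
          fun hf => hf.2 rfl⟩,
          zadj_symm hy0M.2, Or.inl (hnbrΩ y0 hy0M.2), Or.inl hxΩ, Or.inr hxΩ⟩
  have hdisjA : Disjoint S Ax := by
    rw [Set.disjoint_left]
    rintro p ⟨-, h1, -⟩ ⟨z, -, rfl⟩
    exact h1 rfl
  have hdisjB : Disjoint S {((y0, x) : Vtx 2 × Vtx 2)} := by
    rw [Set.disjoint_left]
    rintro p ⟨-, -, h2⟩ hp
    rw [mem_singleton_iff] at hp
    subst hp
    exact h2 rfl
  have hAx3 : Ax.ncard = 3 := by
    rw [hAxdef, Set.ncard_image_of_injective _ (fun a b h => congrArg Prod.snd h)]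
    exact hNout3
  have hmin := hM Ω hΩfin F hsub
  rw [hA, hB, Set.ncard_union_eq hdisjA hSfin hAxfin,
    Set.ncard_union_eq hdisjB hSfin (Set.finite_singleton _), hAx3, Set.ncard_singleton] at hmin
  omega
end

section
/- The vertex boundary of a minimal subgraph of ℤ² cannot contain two distinct parallel horizontal rays, nor two distinct parallel vertical rays. -/
open Set

section NoTwoParallelRaysAux

def P (j : Fin 2) (c x : ℤ) : Vtx 2 := fun k => if k = j then c else x
lemma hne (j : Fin 2) : j + 1 ≠ j := by revert j; decide
@[simp] lemma Pj (j : Fin 2) (c x : ℤ) : P j c x j = c := if_pos rfl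
@[simp] lemma Pi (j : Fin 2) (c x : ℤ) : P j c x (j+1) = x := if_neg (hne j)
lemma eqP (j : Fin 2) (z : Vtx 2) : P j (z j) (z (j+1)) = z := by
  funext k
  rcases (by revert j k; decide : k = j ∨ k = j + 1) with h | h <;> subst h <;> simp [P, hne]
lemma pext {j : Fin 2} {c x c' x' : ℤ} (h : P j c x = P j c' x') : c = c' ∧ x = x' :=
  ⟨by have := congrFun h j; simpa using this,
   by have := congrFun h (j+1); simpa using this⟩
lemma zadj_iff_s12 (j : Fin 2) (z w : Vtx 2) :
    ZAdj z w ↔ (z j - w j).natAbs + (z (j+1) - w (j+1)).natAbs = 1 := by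
  unfold ZAdj
  rw [show (∑ i, (z i - w i).natAbs) = (z j - w j).natAbs + (z (j+1) - w (j+1)).natAbs by
    fin_cases j <;> simp [Fin.sum_univ_two] <;> omega]
lemma zadj_symm_s12 {z w : Vtx 2} (h : ZAdj z w) : ZAdj w z := by
  rw [zadj_iff_s12 0] at h ⊢; omega
lemma adjP {j : Fin 2} {c x : ℤ} {z : Vtx 2} (h : ZAdj (P j c x) z) :
    z = P j (c+1) x ∨ z = P j (c-1) x ∨ z = P j c (x+1) ∨ z = P j c (x-1) := by
  rw [zadj_iff_s12 j] at h
  simp only [Pj, Pi] at h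
  have h2 : (z j = c + 1 ∧ z (j+1) = x) ∨ (z j = c - 1 ∧ z (j+1) = x) ∨
      (z j = c ∧ z (j+1) = x + 1) ∨ (z j = c ∧ z (j+1) = x - 1) := by omega
  rcases h2 with ⟨h1, h2⟩ | ⟨h1, h2⟩ | ⟨h1, h2⟩ | ⟨h1, h2⟩ <;>
    [left; (right; left); (right; right; left); (right; right; right)] <;>
    rw [← eqP j z, h1, h2]

def box (j : Fin 2) (ε r₁ r₂ A B : ℤ) : Set (Vtx 2) :=
  {z | r₁ ≤ z j ∧ z j ≤ r₂ ∧ A ≤ ε * z (j+1) ∧ ε * z (j+1) ≤ B}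
lemma mem_box {j : Fin 2} {ε r₁ r₂ A B : ℤ} {z : Vtx 2} :
    z ∈ box j ε r₁ r₂ A B ↔ r₁ ≤ z j ∧ z j ≤ r₂ ∧ A ≤ ε * z (j+1) ∧ ε * z (j+1) ≤ B :=
  Iff.rfl
@[simp] lemma memP_box {j : Fin 2} {ε r₁ r₂ A B c x : ℤ} :
    P j c x ∈ box j ε r₁ r₂ A B ↔ r₁ ≤ c ∧ c ≤ r₂ ∧ A ≤ ε * x ∧ ε * x ≤ B := by
  simp [box]
lemma box_finite (j : Fin 2) (ε r₁ r₂ A B : ℤ) (hε : ε = 1 ∨ ε = -1) :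
    (box j ε r₁ r₂ A B).Finite := by
  have hε2 : ε * ε = 1 := by rcases hε with h | h <;> subst h <;> norm_num
  apply Set.Finite.subset (((Set.finite_Icc r₁ r₂).prod (Set.finite_Icc A B)).image
    (fun q : ℤ × ℤ => P j q.1 (ε * q.2)))
  intro z hz
  exact ⟨(z j, ε * z (j+1)), ⟨⟨hz.1, hz.2.1⟩, ⟨hz.2.2.1, hz.2.2.2⟩⟩,
    by show P j (z j) (ε * (ε * z (j+1))) = z; rw [← mul_assoc, hε2, one_mul]; exact eqP j z⟩

lemma clos_finite {Ω : Set (Vtx 2)} (hΩ : Ω.Finite) : (clos Ω).Finite := by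
  have h4 : extB Ω ⊆ (fun w : Vtx 2 => P 0 (w 0 + 1) (w (0+1))) '' Ω ∪
      (fun w : Vtx 2 => P 0 (w 0 - 1) (w (0+1))) '' Ω ∪
      (fun w : Vtx 2 => P 0 (w 0) (w (0+1) + 1)) '' Ω ∪
      (fun w : Vtx 2 => P 0 (w 0) (w (0+1) - 1)) '' Ω := by
    rintro z ⟨-, w, hw, hadj⟩
    have h' : ZAdj (P 0 (w 0) (w (0+1))) z := by rw [eqP]; exact zadj_symm_s12 hadj
    rcases adjP h' with h | h | h | h
    · exact Or.inl (Or.inl (Or.inl ⟨w, hw, h.symm⟩))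
    · exact Or.inl (Or.inl (Or.inr ⟨w, hw, h.symm⟩))
    · exact Or.inl (Or.inr ⟨w, hw, h.symm⟩)
    · exact Or.inr ⟨w, hw, h.symm⟩
  exact hΩ.union (Set.Finite.subset
    ((((hΩ.image _).union (hΩ.image _)).union (hΩ.image _)).union (hΩ.image _)) h4)

lemma dirE_finite {Ω : Set (Vtx 2)} (hΩ : Ω.Finite) : (dirE Ω).Finite := by
  apply Set.Finite.subset ((clos_finite hΩ).prod (clos_finite hΩ))
  rintro p ⟨-, h1, h2, -⟩
  exact ⟨h1, h2⟩

lemma ray_vert {M : Set (Vtx 2)} {j : Fin 2} {ε c a A₀ : ℤ} (hε : ε = 1 ∨ ε = -1)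
    (ha : ε * a < A₀)
    (hr : ∀ x : ℤ, ε * a ≤ ε * x → P j c x ∈ vB M) (x : ℤ) :
    ∃ y : Vtx 2, A₀ ≤ ε * x →
      (y = P j (c+1) x ∨ y = P j (c-1) x) ∧ y ∉ M ∧ ZAdj (P j c x) y ∧ P j c x ∈ M := by
  by_cases hx : A₀ ≤ ε * x
  · obtain ⟨hmem, y, hyM, hadj⟩ := hr x (by omega)
    rcases adjP hadj with h | h | h | h
    · exact ⟨y, fun _ => ⟨Or.inl h, hyM, hadj, hmem⟩⟩
    · exact ⟨y, fun _ => ⟨Or.inr h, hyM, hadj, hmem⟩⟩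
    · exact absurd ((hr (x+1) (by rcases hε with h'|h' <;> subst h' <;> omega)).1) (h ▸ hyM)
    · exact absurd ((hr (x-1) (by rcases hε with h'|h' <;> subst h' <;> omega)).1) (h ▸ hyM)
  · exact ⟨fun _ => 0, fun h => absurd h hx⟩

lemma helper {M : Set (Vtx 2)} (hM : IsMinimal M) (j : Fin 2) (c₁ c₂ a₁ a₂ : ℤ)
    (hc : c₁ < c₂) (ε : ℤ) (hε : ε = 1 ∨ ε = -1)
    (h₁ : ∀ x : ℤ, ε * a₁ ≤ ε * x → P j c₁ x ∈ vB M)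
    (h₂ : ∀ x : ℤ, ε * a₂ ≤ ε * x → P j c₂ x ∈ vB M) : False := by
  classical
  have hε2 : ε * ε = 1 := by rcases hε with h | h <;> subst h <;> norm_num
  have hε0 : ε ≠ 0 := by rcases hε with h | h <;> subst h <;> norm_num
  have hxx : ∀ x : ℤ, ε * (ε * x) = x := fun x => by rw [← mul_assoc, hε2, one_mul]
  obtain ⟨A₀, ha1, ha2⟩ : ∃ A, ε * a₁ < A ∧ ε * a₂ < A :=
    ⟨max (ε*a₁) (ε*a₂) + 1, Int.lt_add_one_iff.mpr (le_max_left _ _),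
      Int.lt_add_one_iff.mpr (le_max_right _ _)⟩
  set B := A₀ + 4*(c₂ - c₁) + 7 with hB
  set S := box j ε c₁ c₂ A₀ B with hSdef
  set Ω := box j ε (c₁-1) (c₂+1) A₀ B with hΩdef
  have hSΩ : S ⊆ Ω := by
    intro z hz
    rw [hSdef, mem_box] at hz
    rw [hΩdef, mem_box]
    exact ⟨by omega, by omega, hz.2.2.1, hz.2.2.2⟩
  choose w₁ hw₁ using fun x => ray_vert hε ha1 h₁ x
  choose w₂ hw₂ using fun x => ray_vert hε ha2 h₂ x
  have hΩfin : Ω.Finite := box_finite _ _ _ _ _ _ hε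
  set E := dirE Ω with hEdef
  have hEfin : E.Finite := dirE_finite hΩfin
  set TS : Set (Vtx 2 × Vtx 2) := {p | p.1 ∈ S ∨ p.2 ∈ S} with hTSdef
  -- minimality applications
  have hsub₁ : symmDiff (M ∪ S) M ⊆ Ω := by
    intro z hz
    rw [Set.symmDiff_def] at hz
    rcases hz with ⟨h, hn⟩ | ⟨h, hn⟩
    · rcases h with h | h
      · exact absurd h hn
      · exact hSΩ h
    · exact absurd (Or.inl h) hn
  have hsub₂ : symmDiff (M \ S) M ⊆ Ω := by
    intro z hz
    rw [Set.symmDiff_def] at hz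
    rcases hz with ⟨⟨h, -⟩, hn⟩ | ⟨h, hn⟩
    · exact absurd h hn
    · apply hSΩ; by_contra hzS; exact hn ⟨h, hzS⟩
  have hmin₁ := hM Ω hΩfin (M ∪ S) hsub₁
  have hmin₂ := hM Ω hΩfin (M \ S) hsub₂
  rw [← hEdef] at hmin₁ hmin₂
  -- finiteness of pieces
  have hfM : (dirBdry M ∩ E).Finite := hEfin.subset inter_subset_right
  have hf1 : (dirBdry (M ∪ S) ∩ E).Finite := hEfin.subset inter_subset_right
  have hf2 : (dirBdry (M \ S) ∩ E).Finite := hEfin.subset inter_subset_right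
  -- agreement away from S
  have hagree₁ : (dirBdry (M ∪ S) ∩ E) \ TS = (dirBdry M ∩ E) \ TS := by
    ext p
    simp only [Set.mem_diff, Set.mem_inter_iff, dirBdry, Set.mem_setOf_eq, Set.mem_union,
      hTSdef]
    tauto
  have hagree₂ : (dirBdry (M \ S) ∩ E) \ TS = (dirBdry M ∩ E) \ TS := by
    ext p
    simp only [Set.mem_diff, Set.mem_inter_iff, dirBdry, Set.mem_setOf_eq, Set.mem_union,
      Set.mem_diff, hTSdef]
    tauto
  have key₁ : ((dirBdry M ∩ E) ∩ TS).ncard ≤ ((dirBdry (M ∪ S) ∩ E) ∩ TS).ncard := by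
    have e0 := Set.ncard_inter_add_ncard_diff_eq_ncard (dirBdry M ∩ E) TS hfM
    have e1 := Set.ncard_inter_add_ncard_diff_eq_ncard (dirBdry (M ∪ S) ∩ E) TS hf1
    rw [hagree₁] at e1
    omega
  have key₂ : ((dirBdry M ∩ E) ∩ TS).ncard ≤ ((dirBdry (M \ S) ∩ E) ∩ TS).ncard := by
    have e0 := Set.ncard_inter_add_ncard_diff_eq_ncard (dirBdry M ∩ E) TS hfM
    have e1 := Set.ncard_inter_add_ncard_diff_eq_ncard (dirBdry (M \ S) ∩ E) TS hf2
    rw [hagree₂] at e1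
    omega
  set K := (Finset.Icc A₀ B).card with hKdef
  have hKval : K = (4*(c₂ - c₁) + 8).toNat := by
    rw [hKdef, Int.card_Icc]; congr 1; omega
  -- LOWER BOUND
  have lower : 2 * K ≤ ((dirBdry M ∩ E) ∩ TS).ncard := by
    have hfT : ((dirBdry M ∩ E) ∩ TS).Finite := hfM.subset inter_subset_left
    set f : ℤ × Bool → Vtx 2 × Vtx 2 := fun q =>
      if q.2 then (P j c₂ (ε * q.1), w₂ (ε * q.1)) else (P j c₁ (ε * q.1), w₁ (ε * q.1))
      with hfdef
    set Dom := (Finset.Icc A₀ B) ×ˢ (Finset.univ : Finset Bool) with hDomdef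
    have hDomcard : Dom.card = K * 2 := by
      rw [hDomdef, Finset.card_product, Finset.card_univ, ← hKdef]; rfl
    have hmap : ∀ q ∈ Dom, f q ∈ hfT.toFinset := by
      rintro ⟨x, b⟩ hq
      rw [hDomdef, Finset.mem_product, Finset.mem_Icc] at hq
      obtain ⟨⟨hxA, hxB⟩, -⟩ := hq
      rw [Set.Finite.mem_toFinset]
      have main : ∀ (c : ℤ) (w : ℤ → Vtx 2), c = c₁ ∨ c = c₂ →
          ((w (ε*x) = P j (c+1) (ε*x) ∨ w (ε*x) = P j (c-1) (ε*x)) ∧ w (ε*x) ∉ M ∧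
            ZAdj (P j c (ε*x)) (w (ε*x)) ∧ P j c (ε*x) ∈ M) →
          (P j c (ε*x), w (ε*x)) ∈ (dirBdry M ∩ E) ∩ TS := by
        rintro c w hcc ⟨hvert, hyM, hadj, hmem⟩
        have hc1 : c₁ ≤ c ∧ c ≤ c₂ := by rcases hcc with rfl | rfl <;> omega
        have hΩ1 : P j c (ε*x) ∈ Ω := by
          rw [hΩdef, memP_box, hxx]; omega
        have hΩ2 : w (ε*x) ∈ Ω := by
          rcases hvert with h | h <;> rw [h, hΩdef, memP_box, hxx] <;> omega
        refine ⟨⟨⟨hadj, hmem, hyM⟩, ?_⟩, ?_⟩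
        · exact ⟨hadj, Or.inl hΩ1, Or.inl hΩ2, Or.inl hΩ1⟩
        · rw [hTSdef]; left
          rw [hSdef, memP_box, hxx]; omega
      cases b
      · have h := hw₁ (ε*x) (by rw [hxx]; exact hxA)
        simpa [hfdef] using main c₁ w₁ (Or.inl rfl) h
      · have h := hw₂ (ε*x) (by rw [hxx]; exact hxA)
        simpa [hfdef] using main c₂ w₂ (Or.inr rfl) h
    have hinj : Set.InjOn f Dom := by
      rintro ⟨x, b⟩ - ⟨x', b'⟩ - heq
      have h1 : (f (x, b)).1 = (f (x', b')).1 := by rw [heq]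
      cases b <;> cases b' <;> simp only [hfdef, if_true, if_false, Bool.false_eq_true] at h1 ⊢
      · obtain ⟨-, h⟩ := pext h1
        exact Prod.ext (mul_left_cancel₀ hε0 h) rfl
      · obtain ⟨h, -⟩ := pext h1; omega
      · obtain ⟨h, -⟩ := pext h1; omega
      · obtain ⟨-, h⟩ := pext h1
        exact Prod.ext (mul_left_cancel₀ hε0 h) rfl
    have hcard := Finset.card_le_card_of_injOn f hmap hinj
    rw [hDomcard] at hcard
    rw [Set.ncard_eq_toFinset_card _ hfT]
    omega
  -- UPPER BOUNDS
  set m := (Finset.Icc c₁ c₂).card with hmdef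
  have hmval : m = (c₂ - c₁ + 1).toNat := by rw [hmdef, Int.card_Icc]; congr 1; omega
  obtain ⟨Ut, Ut', Ub, Ub', hUt, hUb, hb1, hb2⟩ : ∃ Ut Ut' Ub Ub' : ℕ,
      Ut + Ut' = K ∧ Ub + Ub' = K ∧
      ((dirBdry (M ∪ S) ∩ E) ∩ TS).ncard ≤ Ut + Ub + 4 * m ∧
      ((dirBdry (M \ S) ∩ E) ∩ TS).ncard ≤ Ut' + Ub' + 4 * m := by
    set Ftop := (Finset.Icc A₀ B).filter (fun x => P j (c₂+1) (ε*x) ∉ M) with hFtop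
    set Fbot := (Finset.Icc A₀ B).filter (fun x => P j (c₁-1) (ε*x) ∉ M) with hFbot
    set Ftop' := (Finset.Icc A₀ B).filter (fun x => P j (c₂+1) (ε*x) ∈ M) with hFtop'
    set Fbot' := (Finset.Icc A₀ B).filter (fun x => P j (c₁-1) (ε*x) ∈ M) with hFbot'
    set Side := (Finset.Icc c₁ c₂) ×ˢ (({A₀, B} : Finset ℤ) ×ˢ ({-1, 1} : Finset ℤ))
      with hSide
    have hSideCard : Side.card ≤ 4 * m := by
      rw [hSide, Finset.card_product, Finset.card_product, ← hmdef]
      have h1 : ({A₀, B} : Finset ℤ).card ≤ 2 := Finset.card_insert_le _ _ |>.trans (by simp)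
      have h2 : ({-1, 1} : Finset ℤ).card ≤ 2 := Finset.card_insert_le _ _ |>.trans (by simp)
      calc m * (({A₀, B} : Finset ℤ).card * ({-1, 1} : Finset ℤ).card)
          ≤ m * (2 * 2) := Nat.mul_le_mul_left m (Nat.mul_le_mul h1 h2)
        _ = 4 * m := by ring
    set G₁ := Ftop.image (fun x => (P j c₂ (ε*x), P j (c₂+1) (ε*x)))
      ∪ Fbot.image (fun x => (P j c₁ (ε*x), P j (c₁-1) (ε*x)))
      ∪ Side.image (fun q : ℤ × ℤ × ℤ => (P j q.1 (ε*q.2.1), P j q.1 (ε*q.2.1 + q.2.2)))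
      with hG₁
    set G₂ := Ftop'.image (fun x => (P j (c₂+1) (ε*x), P j c₂ (ε*x)))
      ∪ Fbot'.image (fun x => (P j (c₁-1) (ε*x), P j c₁ (ε*x)))
      ∪ Side.image (fun q : ℤ × ℤ × ℤ => (P j q.1 (ε*q.2.1 + q.2.2), P j q.1 (ε*q.2.1)))
      with hG₂
    have claim₁ : ((dirBdry (M ∪ S) ∩ E) ∩ TS) ⊆ ↑G₁ := by
      rintro ⟨p1, p2⟩ ⟨⟨⟨hadj, hp1, hp2⟩, hE'⟩, hTSm⟩
      rw [hTSdef, Set.mem_setOf_eq] at hTSm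
      have hp1S : p1 ∈ S := by
        rcases hTSm with h | h
        · exact h
        · exact absurd (Or.inr h) hp2
      have hbox := hp1S
      rw [hSdef, mem_box] at hbox
      obtain ⟨hr1, hr2, hv1, hv2⟩ := hbox
      have hp1eq : p1 = P j (p1 j) (p1 (j+1)) := (eqP j p1).symm
      have hadj' : ZAdj (P j (p1 j) (p1 (j+1))) p2 := hp1eq ▸ hadj
      rw [hG₁]
      rcases adjP hadj' with h | h | h | h
      · -- up
        have hrc : p1 j = c₂ := by
          by_contra hrc
          exact hp2 (Or.inr (by rw [h, hSdef, memP_box]; omega))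
        apply Finset.mem_coe.mpr
        apply Finset.mem_union_left
        apply Finset.mem_union_left
        apply Finset.mem_image.mpr
        refine ⟨ε * p1 (j+1), ?_, ?_⟩
        · rw [hFtop, Finset.mem_filter, Finset.mem_Icc, hxx]
          exact ⟨⟨hv1, hv2⟩, fun hm => hp2 (Or.inl (by rw [h, hrc]; exact hm))⟩
        · rw [hxx, ← hrc]
          exact Prod.ext hp1eq.symm h.symm
      · -- down
        have hrc : p1 j = c₁ := by
          by_contra hrc
          exact hp2 (Or.inr (by rw [h, hSdef, memP_box]; omega))
        apply Finset.mem_coe.mpr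
        apply Finset.mem_union_left
        apply Finset.mem_union_right
        apply Finset.mem_image.mpr
        refine ⟨ε * p1 (j+1), ?_, ?_⟩
        · rw [hFbot, Finset.mem_filter, Finset.mem_Icc, hxx]
          exact ⟨⟨hv1, hv2⟩, fun hm => hp2 (Or.inl (by rw [h, hrc]; exact hm))⟩
        · rw [hxx, ← hrc]
          exact Prod.ext hp1eq.symm h.symm
      · -- right
        have hnS : ¬ (A₀ ≤ ε * (p1 (j+1) + 1) ∧ ε * (p1 (j+1) + 1) ≤ B) := by
          intro hh
          exact hp2 (Or.inr (by rw [h, hSdef, memP_box]; exact ⟨hr1, hr2, hh.1, hh.2⟩))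
        have hcase : ε * p1 (j+1) = A₀ ∨ ε * p1 (j+1) = B := by
          rcases hε with h' | h' <;> subst h' <;> omega
        apply Finset.mem_coe.mpr
        apply Finset.mem_union_right
        apply Finset.mem_image.mpr
        refine ⟨(p1 j, ε * p1 (j+1), 1), ?_, ?_⟩
        · rw [hSide, Finset.mem_product, Finset.mem_product, Finset.mem_Icc]
          refine ⟨⟨hr1, hr2⟩, ?_, by simp⟩
          rcases hcase with h' | h' <;> simp [h']
        · rw [hxx]
          exact Prod.ext hp1eq.symm h.symm
      · -- left
        have hnS : ¬ (A₀ ≤ ε * (p1 (j+1) - 1) ∧ ε * (p1 (j+1) - 1) ≤ B) := by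
          intro hh
          exact hp2 (Or.inr (by rw [h, hSdef, memP_box]; exact ⟨hr1, hr2, hh.1, hh.2⟩))
        have hcase : ε * p1 (j+1) = A₀ ∨ ε * p1 (j+1) = B := by
          rcases hε with h' | h' <;> subst h' <;> omega
        apply Finset.mem_coe.mpr
        apply Finset.mem_union_right
        apply Finset.mem_image.mpr
        refine ⟨(p1 j, ε * p1 (j+1), -1), ?_, ?_⟩
        · rw [hSide, Finset.mem_product, Finset.mem_product, Finset.mem_Icc]
          refine ⟨⟨hr1, hr2⟩, ?_, by simp⟩
          rcases hcase with h' | h' <;> simp [h']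
        · rw [hxx]
          refine Prod.ext hp1eq.symm ?_
          rw [h, sub_eq_add_neg]
    have claim₂ : ((dirBdry (M \ S) ∩ E) ∩ TS) ⊆ ↑G₂ := by
      rintro ⟨p1, p2⟩ ⟨⟨⟨hadj, hp1, hp2⟩, hE'⟩, hTSm⟩
      rw [hTSdef, Set.mem_setOf_eq] at hTSm
      have hp2S : p2 ∈ S := by
        rcases hTSm with h | h
        · exact absurd h hp1.2
        · exact h
      have hbox := hp2S
      rw [hSdef, mem_box] at hbox
      obtain ⟨hr1, hr2, hv1, hv2⟩ := hbox
      have hp2eq : p2 = P j (p2 j) (p2 (j+1)) := (eqP j p2).symm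
      have hadj' : ZAdj (P j (p2 j) (p2 (j+1))) p1 := hp2eq ▸ zadj_symm_s12 hadj
      have hp1M : p1 ∈ M := hp1.1
      have hp1nS : p1 ∉ S := hp1.2
      rw [hG₂]
      rcases adjP hadj' with h | h | h | h
      · -- p1 above p2
        have hrc : p2 j = c₂ := by
          by_contra hrc
          exact hp1nS (by rw [h, hSdef, memP_box]; omega)
        apply Finset.mem_coe.mpr
        apply Finset.mem_union_left
        apply Finset.mem_union_left
        apply Finset.mem_image.mpr
        refine ⟨ε * p2 (j+1), ?_, ?_⟩
        · rw [hFtop', Finset.mem_filter, Finset.mem_Icc, hxx]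
          exact ⟨⟨hv1, hv2⟩, by rw [← hrc, ← h]; exact hp1M⟩
        · rw [hxx, ← hrc]
          exact Prod.ext h.symm hp2eq.symm
      · -- p1 below p2
        have hrc : p2 j = c₁ := by
          by_contra hrc
          exact hp1nS (by rw [h, hSdef, memP_box]; omega)
        apply Finset.mem_coe.mpr
        apply Finset.mem_union_left
        apply Finset.mem_union_right
        apply Finset.mem_image.mpr
        refine ⟨ε * p2 (j+1), ?_, ?_⟩
        · rw [hFbot', Finset.mem_filter, Finset.mem_Icc, hxx]
          exact ⟨⟨hv1, hv2⟩, by rw [← hrc, ← h]; exact hp1M⟩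
        · rw [hxx, ← hrc]
          exact Prod.ext h.symm hp2eq.symm
      · -- p1 right of p2
        have hnS : ¬ (A₀ ≤ ε * (p2 (j+1) + 1) ∧ ε * (p2 (j+1) + 1) ≤ B) := by
          intro hh
          exact hp1nS (by rw [h, hSdef, memP_box]; exact ⟨hr1, hr2, hh.1, hh.2⟩)
        have hcase : ε * p2 (j+1) = A₀ ∨ ε * p2 (j+1) = B := by
          rcases hε with h' | h' <;> subst h' <;> omega
        apply Finset.mem_coe.mpr
        apply Finset.mem_union_right
        apply Finset.mem_image.mpr
        refine ⟨(p2 j, ε * p2 (j+1), 1), ?_, ?_⟩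
        · rw [hSide, Finset.mem_product, Finset.mem_product, Finset.mem_Icc]
          refine ⟨⟨hr1, hr2⟩, ?_, by simp⟩
          rcases hcase with h' | h' <;> simp [h']
        · rw [hxx]
          exact Prod.ext h.symm hp2eq.symm
      · -- p1 left of p2
        have hnS : ¬ (A₀ ≤ ε * (p2 (j+1) - 1) ∧ ε * (p2 (j+1) - 1) ≤ B) := by
          intro hh
          exact hp1nS (by rw [h, hSdef, memP_box]; exact ⟨hr1, hr2, hh.1, hh.2⟩)
        have hcase : ε * p2 (j+1) = A₀ ∨ ε * p2 (j+1) = B := by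
          rcases hε with h' | h' <;> subst h' <;> omega
        apply Finset.mem_coe.mpr
        apply Finset.mem_union_right
        apply Finset.mem_image.mpr
        refine ⟨(p2 j, ε * p2 (j+1), -1), ?_, ?_⟩
        · rw [hSide, Finset.mem_product, Finset.mem_product, Finset.mem_Icc]
          refine ⟨⟨hr1, hr2⟩, ?_, by simp⟩
          rcases hcase with h' | h' <;> simp [h']
        · rw [hxx]
          refine Prod.ext ?_ hp2eq.symm
          rw [h, sub_eq_add_neg]
    have hcard₁ : ((dirBdry (M ∪ S) ∩ E) ∩ TS).ncard ≤ Ftop.card + Fbot.card + 4 * m := by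
      calc ((dirBdry (M ∪ S) ∩ E) ∩ TS).ncard ≤ (↑G₁ : Set (Vtx 2 × Vtx 2)).ncard :=
            Set.ncard_le_ncard claim₁ (G₁.finite_toSet)
        _ = G₁.card := Set.ncard_coe_finset G₁
        _ ≤ (Ftop.image _ ∪ Fbot.image _).card + (Side.image _).card := by
            rw [hG₁]; exact Finset.card_union_le _ _
        _ ≤ Ftop.card + Fbot.card + 4 * m := by
            have u1 := Finset.card_union_le (Ftop.image (fun x => (P j c₂ (ε*x), P j (c₂+1) (ε*x))))
              (Fbot.image (fun x => (P j c₁ (ε*x), P j (c₁-1) (ε*x))))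
            have i1 := Finset.card_image_le (s := Ftop)
              (f := fun x => (P j c₂ (ε*x), P j (c₂+1) (ε*x)))
            have i2 := Finset.card_image_le (s := Fbot)
              (f := fun x => (P j c₁ (ε*x), P j (c₁-1) (ε*x)))
            have i3 := Finset.card_image_le (s := Side)
              (f := fun q : ℤ × ℤ × ℤ => (P j q.1 (ε*q.2.1), P j q.1 (ε*q.2.1 + q.2.2)))
            omega
    have hcard₂ : ((dirBdry (M \ S) ∩ E) ∩ TS).ncard ≤ Ftop'.card + Fbot'.card + 4 * m := by
      calc ((dirBdry (M \ S) ∩ E) ∩ TS).ncard ≤ (↑G₂ : Set (Vtx 2 × Vtx 2)).ncard :=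
            Set.ncard_le_ncard claim₂ (G₂.finite_toSet)
        _ = G₂.card := Set.ncard_coe_finset G₂
        _ ≤ (Ftop'.image _ ∪ Fbot'.image _).card + (Side.image _).card := by
            rw [hG₂]; exact Finset.card_union_le _ _
        _ ≤ Ftop'.card + Fbot'.card + 4 * m := by
            have u1 := Finset.card_union_le (Ftop'.image (fun x => (P j (c₂+1) (ε*x), P j c₂ (ε*x))))
              (Fbot'.image (fun x => (P j (c₁-1) (ε*x), P j c₁ (ε*x))))
            have i1 := Finset.card_image_le (s := Ftop')
              (f := fun x => (P j (c₂+1) (ε*x), P j c₂ (ε*x)))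
            have i2 := Finset.card_image_le (s := Fbot')
              (f := fun x => (P j (c₁-1) (ε*x), P j c₁ (ε*x)))
            have i3 := Finset.card_image_le (s := Side)
              (f := fun q : ℤ × ℤ × ℤ => (P j q.1 (ε*q.2.1 + q.2.2), P j q.1 (ε*q.2.1)))
            omega
    have hsum1 : Ftop.card + Ftop'.card = K := by
      rw [hFtop, hFtop', hKdef]
      have := Finset.card_filter_add_card_filter_not
        (s := Finset.Icc A₀ B) (p := fun x => P j (c₂+1) (ε*x) ∉ M)
      simpa using this
    have hsum2 : Fbot.card + Fbot'.card = K := by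
      rw [hFbot, hFbot', hKdef]
      have := Finset.card_filter_add_card_filter_not
        (s := Finset.Icc A₀ B) (p := fun x => P j (c₁-1) (ε*x) ∉ M)
      simpa using this
    exact ⟨Ftop.card, Ftop'.card, Fbot.card, Fbot'.card, hsum1, hsum2, hcard₁, hcard₂⟩
  omega

/-- the vertex boundary of a minimal subgraph of `ℤ²` cannot contain two
distinct parallel horizontal rays, nor two distinct parallel vertical rays.  Here `j` is the
coordinate that is constant on each ray (`j = 1`: horizontal, `j = 0`: vertical), the two rays
lie on the distinct lines `z j = c₁`, `z j = c₂` and point in the common direction `ε`. -/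
theorem no_two_parallel_rays {M : Set (Vtx 2)} (hM : IsMinimal M)
    (j : Fin 2) (c₁ c₂ a₁ a₂ : ℤ) (hc : c₁ ≠ c₂) (ε : ℤ) (hε : ε = 1 ∨ ε = -1) :
    ¬ ({z : Vtx 2 | z j = c₁ ∧ ∃ t : ℕ, z (j + 1) = a₁ + ε * t} ⊆ vB M ∧
       {z : Vtx 2 | z j = c₂ ∧ ∃ t : ℕ, z (j + 1) = a₂ + ε * t} ⊆ vB M) := by
  rintro ⟨H₁, H₂⟩
  have conv : ∀ (c a : ℤ), ({z : Vtx 2 | z j = c ∧ ∃ t : ℕ, z (j + 1) = a + ε * t} ⊆ vB M) →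
      ∀ x : ℤ, ε * a ≤ ε * x → P j c x ∈ vB M := by
    intro c a H x hx
    refine H ⟨Pj j c x, (ε * x - ε * a).toNat, ?_⟩
    rw [Pi]
    rcases hε with rfl | rfl <;> omega
  rcases lt_or_gt_of_ne hc with h | h
  · exact helper hM j c₁ c₂ a₁ a₂ h ε hε (conv c₁ a₁ H₁) (conv c₂ a₂ H₂)
  · exact helper hM j c₂ c₁ a₂ a₁ h ε hε (conv c₂ a₂ H₂) (conv c₁ a₁ H₁)

end NoTwoParallelRaysAux
end
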